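/- arXiv:1909.13071 — 4 statements merged into one kernel-verified Lean document; each statement's English description precedes it below -/
import Mathlib

section
/- Every (ρ,d)-dense graph G on n vertices contains at least (d^{C(k,2)} − (k−1)k·ρ)·n^k ordered copies of the complete graph K_k (i.e., homomorphism-counting ordered k-tuples of distinct vertices spanning a clique). -/
open Finset
open scoped Classical

variable {V : Type*} [Fintype V] [DecidableEq V]

/-- Number of ordered pairs `(x,y) ∈ X × Y` with `x` adjacent to `y`.
For disjoint `X`, `Y` this is the number `e(X,Y)` of edges between `X` and `Y`. -/
noncomputable def crossCount (G : SimpleGraph V) (X Y : Finset V) : ℕ :=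
  ((X ×ˢ Y).filter fun p => G.Adj p.1 p.2).card

/-- Number of ordered adjacent pairs inside `U`; `edgePairs G U / 2 = e(U)`. -/
noncomputable def edgePairs (G : SimpleGraph V) (U : Finset V) : ℕ :=
  ((U ×ˢ U).filter fun p => G.Adj p.1 p.2).card

/-- `G` is `(ρ,d)`-dense: `e(U) ≥ d|U|²/2 - ρ n²` for every `U`. -/
def RhoDense (G : SimpleGraph V) (ρ d : ℝ) : Prop :=
  ∀ U : Finset V,
    (edgePairs G U : ℝ) / 2 ≥ d * (U.card : ℝ) ^ 2 / 2 - ρ * (Fintype.card V : ℝ) ^ 2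

/-- `G` is `μ`-inseparable: `e(X, V∖X) ≥ μ|X||V∖X|` for every `X`. -/
def MuInsep (G : SimpleGraph V) (μ : ℝ) : Prop :=
  ∀ X : Finset V, (crossCount G X Xᶜ : ℝ) ≥ μ * (X.card : ℝ) * (Xᶜ.card : ℝ)

/-- Number of common neighbours of the vertices of the tuple `x`. -/
noncomputable def extCount (G : SimpleGraph V) {k : ℕ} (x : Fin k → V) : ℕ :=
  (Finset.univ.filter fun w => ∀ i, G.Adj (x i) w).card

/-- A `k`-tuple is `ζ`-connectable if it extends to at least `ζn` cliques `K_{k+1}`. -/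
def Connectable (G : SimpleGraph V) (ζ : ℝ) {k : ℕ} (x : Fin k → V) : Prop :=
  (extCount G x : ℝ) ≥ ζ * (Fintype.card V : ℝ)

/-- `v` is a `k`-path (the `k`-th power of a path) in `G`. -/
def IsPowPath (G : SimpleGraph V) (k : ℕ) {ℓ : ℕ} (v : Fin ℓ → V) : Prop :=
  Function.Injective v ∧
    ∀ i j : Fin ℓ, (i : ℕ) < (j : ℕ) → (j : ℕ) ≤ (i : ℕ) + k → G.Adj (v i) (v j)

/-- Number of `(x,y)`-walks with exactly `ℓ` inner vertices. -/
noncomputable def walkCount (G : SimpleGraph V) (x y : V) (ℓ : ℕ) : ℕ :=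
  (Finset.univ.filter fun v : Fin ℓ → V =>
    ∀ i : Fin (ℓ + 1),
      G.Adj ((Fin.cons x (Fin.snoc v y) : Fin (ℓ + 2) → V) i.castSucc)
        ((Fin.cons x (Fin.snoc v y) : Fin (ℓ + 2) → V) i.succ)).card

/-- Number of `(x⃗,y⃗;k)`-paths with exactly `m` inner vertices. -/
noncomputable def pathCount (G : SimpleGraph V) (k : ℕ) (x y : Fin k → V) (m : ℕ) : ℕ :=
  (Finset.univ.filter fun w : Fin m → V =>
    IsPowPath G k (Fin.append (Fin.append x w) y)).card

/-- `G` contains the `k`-th power of a Hamiltonian cycle. -/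
def HasHamCyclePower {n : ℕ} (G : SimpleGraph (Fin n)) (k : ℕ) : Prop :=
  ∃ σ : Equiv.Perm (Fin n), ∀ (i : Fin n) (s : ℕ), 0 < s → s ≤ k →
    G.Adj (σ i) (σ ⟨((i : ℕ) + s) % n, Nat.mod_lt _ i.pos⟩)

noncomputable def cliqueTuples (G : SimpleGraph V) (k : ℕ) (U : Finset V) :
    Finset (Fin k → V) :=
  Finset.univ.filter fun x => (∀ i, x i ∈ U) ∧ ∀ i j, i ≠ j → G.Adj (x i) (x j)

lemma mem_cliqueTuples {G : SimpleGraph V} {k : ℕ} {U : Finset V} {x : Fin k → V} :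
    x ∈ cliqueTuples G k U ↔ (∀ i, x i ∈ U) ∧ ∀ i j, i ≠ j → G.Adj (x i) (x j) := by
  simp [cliqueTuples]

lemma card_cliqueTuples_zero (G : SimpleGraph V) (U : Finset V) :
    (cliqueTuples G 0 U).card = 1 := by
  rw [cliqueTuples, Finset.filter_true_of_mem (fun x _ => ⟨fun i => i.elim0, fun i j _ => i.elim0⟩),
    Finset.card_univ]
  simp

lemma card_cliqueTuples_succ (G : SimpleGraph V) (k : ℕ) (U : Finset V) :
    (cliqueTuples G (k+1) U).card
      = ∑ v ∈ U, (cliqueTuples G k (U ∩ G.neighborFinset v)).card := by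
  rw [Finset.card_eq_sum_card_fiberwise (f := fun x : Fin (k+1) → V => x 0) (t := U)
    (fun x hx => (mem_cliqueTuples.1 hx).1 0)]
  refine Finset.sum_congr rfl fun v hv => ?_
  refine Finset.card_nbij' (fun x => Fin.tail x) (fun y => Fin.cons v y) ?_ ?_ ?_ ?_
  · intro x hx
    obtain ⟨hx, hx0⟩ := Finset.mem_filter.1 hx
    obtain ⟨hmem, hadj⟩ := mem_cliqueTuples.1 hx
    refine mem_cliqueTuples.2 ⟨fun i => ?_, fun i j hij => ?_⟩
    · refine Finset.mem_inter.2 ⟨hmem i.succ, ?_⟩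
      rw [SimpleGraph.mem_neighborFinset, ← hx0]
      exact hadj 0 i.succ (Fin.succ_ne_zero i).symm
    · exact hadj i.succ j.succ (fun h => hij (Fin.succ_injective _ h))
  · intro y hy
    obtain ⟨hmem, hadj⟩ := mem_cliqueTuples.1 hy
    refine Finset.mem_filter.2 ⟨mem_cliqueTuples.2 ⟨?_, ?_⟩, Fin.cons_zero _ _⟩
    · intro i
      refine Fin.cases ?_ (fun j => ?_) i
      · simpa using hv
      · simpa using (Finset.mem_inter.1 (hmem j)).1
    · intro i j hij
      induction i using Fin.cases with
      | zero =>
        induction j using Fin.cases with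
        | zero => exact absurd rfl hij
        | succ j' =>
          have := (SimpleGraph.mem_neighborFinset _ _ _).1 (Finset.mem_inter.1 (hmem j')).2
          simpa using this
      | succ i' =>
        induction j using Fin.cases with
        | zero =>
          have := (SimpleGraph.mem_neighborFinset _ _ _).1 (Finset.mem_inter.1 (hmem i')).2
          simpa using this.symm
        | succ j' =>
          have hne : i' ≠ j' := fun h => hij (by rw [h])
          simpa using hadj i' j' hne
  · intro x hx
    obtain ⟨_, hx0⟩ := Finset.mem_filter.1 hx
    rw [← hx0]
    exact Fin.cons_self_tail x
  · intro y _
    simp [Fin.tail_cons]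

lemma card_cliqueTuples_one (G : SimpleGraph V) (U : Finset V) :
    (cliqueTuples G 1 U).card = U.card := by
  rw [card_cliqueTuples_succ]
  simp [card_cliqueTuples_zero]

lemma edgePairs_eq_sum (G : SimpleGraph V) (U : Finset V) :
    edgePairs G U = ∑ v ∈ U, (U ∩ G.neighborFinset v).card := by
  rw [edgePairs, Finset.card_filter, Finset.sum_product]
  refine Finset.sum_congr rfl fun v hv => ?_
  rw [← Finset.card_filter]
  congr 1
  ext w
  simp [SimpleGraph.mem_neighborFinset, and_comm]

lemma card_cliqueTuples_two (G : SimpleGraph V) (U : Finset V) :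
    (cliqueTuples G 2 U).card = edgePairs G U := by
  rw [card_cliqueTuples_succ, edgePairs_eq_sum]
  exact Finset.sum_congr rfl fun v _ => card_cliqueTuples_one G _

lemma pow_sub_aux (k : ℕ) {a b : ℝ} (hb : 0 ≤ b) (hba : b ≤ a) :
    a ^ (k+1) - (k+1) * b * a ^ k ≤ (a - b) ^ (k+1) := by
  induction k with
  | zero => simp
  | succ k ih =>
    have ha : 0 ≤ a := hb.trans hba
    have h1 : (a - b) * (a ^ (k+1) - (k+1) * b * a ^ k) ≤ (a - b) * (a - b) ^ (k+1) :=
      mul_le_mul_of_nonneg_left ih (by linarith)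
    have h2 : (a - b) ^ (k + 1 + 1) = (a - b) * (a - b) ^ (k+1) := by ring
    have h3 : 0 ≤ (k : ℝ) + 1 := by positivity
    have e1 : a ^ (k+1) = a ^ k * a := pow_succ a k
    have e2 : a ^ (k+1+1) = a ^ k * a * a := by rw [pow_succ, pow_succ]
    rw [e1] at h1
    push_cast
    rw [e2, h2, e1]
    nlinarith [pow_nonneg ha k, mul_nonneg (mul_nonneg h3 (mul_nonneg hb hb)) (pow_nonneg ha k)]

lemma key_ineq (m : ℕ) {d u r E : ℝ} (hd0 : 0 ≤ d) (hd1 : d ≤ 1) (hu : 0 ≤ u) (hr : 0 ≤ r)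
    (hE0 : 0 ≤ E) (hE : d * u ^ 2 - 2 * r ≤ E) :
    (d ^ (m+2) * u ^ (m+3) - 2 * ((m:ℝ)+2) * r * u ^ (m+1)) * u ^ (m+1) ≤ E ^ (m+2) := by
  have hd' : d ^ (m+1) ≤ 1 := pow_le_one₀ hd0 hd1
  have hEp : (0:ℝ) ≤ E ^ (m+2) := pow_nonneg hE0 _
  have hup : (0:ℝ) ≤ u^(m+1) * u^(m+1) := mul_nonneg (pow_nonneg hu _) (pow_nonneg hu _)
  by_cases hc : d * u ^ 2 ≤ 2 * r
  · have h1 : d ^ (m+2) * u ^ 2 ≤ 2 * ((m:ℝ)+2) * r := by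
      have e : d^(m+2) * u^2 = d^(m+1) * (d * u^2) := by ring
      rw [e]
      have h2 : d^(m+1) * (d*u^2) ≤ 1 * (2*r) :=
        mul_le_mul hd' hc (by positivity) one_pos.le
      nlinarith [mul_nonneg (Nat.cast_nonneg (α := ℝ) m) hr]
    have e : (d ^ (m+2) * u ^ (m+3) - 2*((m:ℝ)+2)*r*u^(m+1)) * u^(m+1)
        = (d^(m+2)*u^2 - 2*((m:ℝ)+2)*r) * (u^(m+1)*u^(m+1)) := by ring
    rw [e]
    have h7 : 0 ≤ (2*((m:ℝ)+2)*r - d^(m+2)*u^2) * (u^(m+1)*u^(m+1)) :=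
      mul_nonneg (by linarith) hup
    nlinarith [hEp]
  · push_neg at hc
    have hb := pow_sub_aux (m+1) (by positivity : (0:ℝ) ≤ 2*r) hc.le
    have hE2 : (d*u^2 - 2*r)^(m+2) ≤ E^(m+2) :=
      pow_le_pow_left₀ (by linarith) hE _
    have e1 : (d*u^2)^(m+2) = d^(m+2)*(u^2)^(m+2) := mul_pow _ _ _
    have e2 : (d*u^2)^(m+1) = d^(m+1)*(u^2)^(m+1) := mul_pow _ _ _
    have e3 : (u^2)^(m+2) = u^(m+3) * u^(m+1) := by
      rw [← pow_mul, ← pow_add]; congr 1; omega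
    have e4 : (u^2)^(m+1) = u^(m+1) * u^(m+1) := by
      rw [← pow_mul, ← pow_add]; congr 1; omega
    rw [e1, e2, e3, e4] at hb
    push_cast at hb
    have h6 : 0 ≤ 2*((m:ℝ)+2)*r * (u^(m+1)*u^(m+1) - d^(m+1)*(u^(m+1)*u^(m+1))) := by
      refine mul_nonneg (by positivity) ?_
      nlinarith [hup, hd']
    nlinarith [hb, hE2, h6]

lemma cliqueTuples_lower (G : SimpleGraph V) (ρ d : ℝ) (hρ : 0 ≤ ρ) (hd0 : 0 ≤ d)
    (hd1 : d ≤ 1) (hG : RhoDense G ρ d) :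
    ∀ k : ℕ, 2 ≤ k → ∀ U : Finset V,
      d ^ (k.choose 2) * (U.card : ℝ) ^ k
          - ((k : ℝ) - 1) * (k : ℝ) * ρ * (Fintype.card V : ℝ) ^ 2 * (U.card : ℝ) ^ (k - 2)
        ≤ ((cliqueTuples G k U).card : ℝ) := by
  intro k hk
  induction k, hk using Nat.le_induction with
  | base =>
    intro U
    have h := hG U
    rw [card_cliqueTuples_two G U]
    have h2 : Nat.choose 2 2 = 1 := by decide
    rw [h2]
    norm_num
    linarith
  | succ k hk ih =>
    intro U
    obtain ⟨m, rfl⟩ : ∃ m, k = m + 2 := ⟨k - 2, by omega⟩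
    set N : ℝ := (Fintype.card V : ℝ) with hN
    have hNnn : 0 ≤ N := Nat.cast_nonneg _
    set C := (m+2).choose 2 with hC
    have hCC : (m+2+1).choose 2 = C + (m+2) := by
      rw [hC, Nat.choose_succ_succ (m+2) 1, Nat.choose_one_right, Nat.add_comm]
    rw [hCC, show m + 2 + 1 - 2 = m + 1 from by omega]
    rcases Finset.eq_empty_or_nonempty U with rfl | hU
    · simp only [Finset.card_empty, Nat.cast_zero]
      rw [zero_pow (by omega : m + 2 + 1 ≠ 0), zero_pow (by omega : m + 1 ≠ 0)]
      simpa using Nat.cast_nonneg _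
    · have hu0 : (0:ℝ) < (U.card : ℝ) := by exact_mod_cast Finset.card_pos.2 hU
      set u : ℝ := (U.card : ℝ) with hu
      set W : V → Finset V := fun v => U ∩ G.neighborFinset v with hW
      set w : V → ℝ := fun v => ((W v).card : ℝ) with hwdef
      have hWle : ∀ v, w v ≤ u := fun v => by
        simp only [hwdef, hW, hu]
        exact_mod_cast Finset.card_le_card (Finset.inter_subset_left)
      have hWnn : ∀ v, (0:ℝ) ≤ w v := fun v => Nat.cast_nonneg _
      -- step 1: recursion + induction hypothesis
      have hsum : ∑ v ∈ U, (d ^ C * w v ^ (m+2)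
            - (((m:ℝ)+2) - 1) * ((m:ℝ)+2) * ρ * N ^ 2 * w v ^ m)
          ≤ ((cliqueTuples G (m+2+1) U).card : ℝ) := by
        rw [card_cliqueTuples_succ G (m+2) U]
        push_cast
        refine Finset.sum_le_sum fun v hv => ?_
        have h := ih (W v)
        rw [show m + 2 - 2 = m from by omega] at h
        push_cast at h
        exact h
      -- step 2: bound the two sums
      have hS0 : ∑ v ∈ U, w v ^ m ≤ u * u ^ m := by
        calc ∑ v ∈ U, w v ^ m ≤ ∑ v ∈ U, u ^ m :=
              Finset.sum_le_sum fun v _ => pow_le_pow_left₀ (hWnn v) (hWle v) m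
          _ = u * u ^ m := by rw [Finset.sum_const, nsmul_eq_mul, hu]
      have hEsum : ((edgePairs G U : ℕ) : ℝ) = ∑ v ∈ U, w v := by
        rw [edgePairs_eq_sum]; push_cast; rfl
      have hJen : (∑ v ∈ U, w v) ^ (m+2) / u ^ (m+1) ≤ ∑ v ∈ U, w v ^ (m+2) :=
        pow_sum_div_card_le_sum_pow (fun v _ => hWnn v) (m+1)
      have hEd : d * u ^ 2 - 2 * (ρ * N ^ 2) ≤ ((edgePairs G U : ℕ) : ℝ) := by
        have h := hG U; rw [ge_iff_le] at h; linarith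
      have hkey := key_ineq m hd0 hd1 hu0.le (by positivity : (0:ℝ) ≤ ρ * N ^ 2)
        (Nat.cast_nonneg _) hEd
      have hupos : (0:ℝ) < u ^ (m+1) := pow_pos hu0 _
      have hS1 : d ^ (m+2) * u ^ (m+3) - 2 * ((m:ℝ)+2) * (ρ * N ^ 2) * u ^ (m+1)
          ≤ ∑ v ∈ U, w v ^ (m+2) := by
        refine le_trans ?_ hJen
        rw [← hEsum, le_div_iff₀ hupos]
        exact hkey
      -- step 3: combine
      have hdC : (0:ℝ) ≤ d ^ C := pow_nonneg hd0 C
      have hdC1 : d ^ C ≤ 1 := pow_le_one₀ hd0 hd1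
      have hc' : (0:ℝ) ≤ (((m:ℝ)+2) - 1) * ((m:ℝ)+2) * ρ * N ^ 2 := by
        have e : (((m:ℝ)+2) - 1) * ((m:ℝ)+2) * ρ * N ^ 2 = ((m:ℝ)+1) * ((m:ℝ)+2) * ρ * N ^ 2 := by
          ring
        rw [e]; positivity
      have hA : d ^ C * (d ^ (m+2) * u ^ (m+3) - 2 * ((m:ℝ)+2) * (ρ * N ^ 2) * u ^ (m+1))
          ≤ d ^ C * ∑ v ∈ U, w v ^ (m+2) := mul_le_mul_of_nonneg_left hS1 hdC
      have hB : (((m:ℝ)+2) - 1) * ((m:ℝ)+2) * ρ * N ^ 2 * ∑ v ∈ U, w v ^ m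
          ≤ (((m:ℝ)+2) - 1) * ((m:ℝ)+2) * ρ * N ^ 2 * (u * u ^ m) :=
        mul_le_mul_of_nonneg_left hS0 hc'
      have hsplit : ∑ v ∈ U, (d ^ C * w v ^ (m+2)
            - (((m:ℝ)+2) - 1) * ((m:ℝ)+2) * ρ * N ^ 2 * w v ^ m)
          = d ^ C * (∑ v ∈ U, w v ^ (m+2))
            - (((m:ℝ)+2) - 1) * ((m:ℝ)+2) * ρ * N ^ 2 * ∑ v ∈ U, w v ^ m := by
        rw [Finset.sum_sub_distrib, Finset.mul_sum, Finset.mul_sum]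
      have hD : d ^ C * d ^ (m+2) = d ^ (C + (m+2)) := (pow_add d C (m+2)).symm
      have hErr : d ^ C * (2 * ((m:ℝ)+2) * (ρ * N ^ 2) * u ^ (m+1))
          ≤ 2 * ((m:ℝ)+2) * (ρ * N ^ 2) * u ^ (m+1) := by
        nlinarith [mul_nonneg (mul_nonneg (by positivity : (0:ℝ) ≤ 2 * ((m:ℝ)+2))
          (by positivity : (0:ℝ) ≤ ρ * N ^ 2)) hupos.le]
      have hA2 : d ^ (C+(m+2)) * u ^ (m+3)
          - d ^ C * (2 * ((m:ℝ)+2) * (ρ * N ^ 2) * u ^ (m+1))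
          ≤ d ^ C * ∑ v ∈ U, w v ^ (m+2) := by
        calc d ^ (C+(m+2)) * u ^ (m+3)
              - d ^ C * (2 * ((m:ℝ)+2) * (ρ * N ^ 2) * u ^ (m+1))
            = d ^ C * (d ^ (m+2) * u ^ (m+3) - 2 * ((m:ℝ)+2) * (ρ * N ^ 2) * u ^ (m+1)) := by
              rw [← hD]; ring
          _ ≤ _ := hA
      have hgoal : d ^ (C + (m+2)) * u ^ (m+2+1)
          - ((↑(m+2+1) : ℝ) - 1) * (↑(m+2+1) : ℝ) * ρ * N ^ 2 * u ^ (m+1)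
          ≤ ((cliqueTuples G (m+2+1) U).card : ℝ) := by
        push_cast
        have e5 : u ^ (m+2+1) = u ^ (m+3) := rfl
        have e6 : u * u ^ m = u ^ (m+1) := (pow_succ' u m).symm
        rw [e5]
        rw [hsplit] at hsum
        rw [e6] at hB
        linarith [hA2, hB, hsum, hErr]
      exact_mod_cast hgoal


/-- Every (ρ,d)-dense graph on n vertices contains at least
(d^{C(k,2)} − (k−1)k ρ) n^k ordered copies of K_k. -/
theorem stmt0 (n k : ℕ) (ρ d : ℝ) (hρ : 0 < ρ) (hd0 : 0 ≤ d) (hd1 : d ≤ 1)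
    (G : SimpleGraph (Fin n)) (hG : RhoDense G ρ d) :
    ((Finset.univ.filter fun x : Fin k → Fin n =>
        ∀ i j, i ≠ j → G.Adj (x i) (x j)).card : ℝ) ≥
      (d ^ (k.choose 2) - ((k : ℝ) - 1) * (k : ℝ) * ρ) * (n : ℝ) ^ k := by
  match k with
  | 0 =>
    rw [Finset.filter_true_of_mem (fun x _ => fun i j h => i.elim0), Finset.card_univ]
    simp
  | 1 =>
    rw [Finset.filter_true_of_mem
      (fun x _ => fun i j h => absurd (Subsingleton.elim i j) h), Finset.card_univ]
    simp
  | (k+2) =>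
    have h := cliqueTuples_lower G ρ d hρ.le hd0 hd1 hG (k+2) (by omega) Finset.univ
    have hset : (Finset.univ.filter fun x : Fin (k+2) → Fin n =>
        ∀ i j, i ≠ j → G.Adj (x i) (x j)) = cliqueTuples G (k+2) Finset.univ := by
      rw [cliqueTuples]
      exact Finset.filter_congr fun x _ => by simp
    rw [hset, ge_iff_le]
    simp only [Finset.card_univ, Fintype.card_fin,
      show k + 2 - 2 = k from by omega] at h
    have e : ((n:ℝ))^2 * (n:ℝ)^k = (n:ℝ)^(k+2) := by
      rw [← pow_add]; congr 1; omega
    calc (d ^ ((k+2).choose 2) - ((↑(k+2):ℝ) - 1) * (↑(k+2):ℝ) * ρ) * (n:ℝ)^(k+2)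
        = d ^ ((k+2).choose 2) * (n:ℝ)^(k+2)
          - ((↑(k+2):ℝ) - 1) * (↑(k+2):ℝ) * ρ * ((n:ℝ)^2 * (n:ℝ)^k) := by ring
      _ = d ^ ((k+2).choose 2) * (n:ℝ)^(k+2)
          - ((↑(k+2):ℝ) - 1) * (↑(k+2):ℝ) * ρ * (n:ℝ)^2 * (n:ℝ)^k := by ring
      _ ≤ _ := h
end

section
/- If G=(V,E) is μ-inseparable on n vertices and U⊆V has |U| ≤ βμn with 0<β<1/2, then the induced subgraph G[V∖U] is (1−2β)μ-inseparable. -/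
open Finset
open scoped Classical

variable {V : Type*} [Fintype V] [DecidableEq V]

section Aux
set_option linter.unusedSectionVars false

lemma crossCount_comm (G : SimpleGraph V) (A B : Finset V) :
    crossCount G A B = crossCount G B A := by
  unfold crossCount
  apply Finset.card_bij' (fun p _ => (p.2, p.1)) (fun p _ => (p.2, p.1)) <;>
    simp [G.adj_comm, and_comm]

lemma crossCount_union (G : SimpleGraph V) (A B C : Finset V) (h : Disjoint B C) :
    crossCount G A (B ∪ C) = crossCount G A B + crossCount G A C := by
  unfold crossCount
  rw [Finset.product_union, Finset.filter_union, Finset.card_union_of_disjoint]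
  apply Finset.disjoint_filter_filter
  rw [Finset.disjoint_left]
  intro p hp hp'
  simp only [Finset.mem_product] at hp hp'
  exact (Finset.disjoint_left.mp h) hp.2 hp'.2

lemma crossCount_le (G : SimpleGraph V) (A B : Finset V) :
    crossCount G A B ≤ A.card * B.card := by
  calc crossCount G A B ≤ (A ×ˢ B).card := Finset.card_filter_le _ _
  _ = A.card * B.card := Finset.card_product A B

end Aux

/-- removing at most βμn vertices from a μ-inseparable graph leaves a
(1−2β)μ-inseparable graph (inseparability of `G[V∖U]` stated via subsets of `Uᶜ`). -/
theorem stmt2 (n : ℕ) (μ β : ℝ) (hμ : 0 < μ) (hβ0 : 0 < β) (hβ : β < 1/2)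
    (G : SimpleGraph (Fin n)) (hG : MuInsep G μ)
    (U : Finset (Fin n)) (hU : (U.card : ℝ) ≤ β * μ * (n : ℝ)) :
    ∀ X : Finset (Fin n), X ⊆ Uᶜ →
      (crossCount G X (Uᶜ \ X) : ℝ) ≥
        (1 - 2 * β) * μ * (X.card : ℝ) * ((Uᶜ \ X).card : ℝ) := by
  intro X hX
  set Y := Uᶜ \ X with hYdef
  have hd : ∀ a, a ∈ X → a ∉ U := fun a ha => Finset.mem_compl.mp (hX ha)
  have hdYU : Disjoint Y U := by
    rw [Finset.disjoint_left]
    intro a ha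
    exact Finset.mem_compl.mp (Finset.mem_sdiff.mp ha).1
  have hdXU : Disjoint X U := Finset.disjoint_left.mpr hd
  have hXcomp : Xᶜ = Y ∪ U := by
    ext a
    simp only [Finset.mem_compl, Finset.mem_union, Finset.mem_sdiff, hYdef]
    constructor
    · intro h
      rcases em (a ∈ U) with hu | hu
      · exact Or.inr hu
      · exact Or.inl ⟨hu, h⟩
    · rintro (⟨_, h⟩ | hu)
      · exact h
      · exact fun hx => hd a hx hu
  have hYcomp : Yᶜ = X ∪ U := by
    ext a
    simp only [Finset.mem_compl, Finset.mem_union, Finset.mem_sdiff, hYdef,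
      not_and, not_not]
    constructor
    · intro h
      rcases em (a ∈ U) with hu | hu
      · exact Or.inr hu
      · exact Or.inl (h hu)
    · rintro (hx | hu)
      · exact fun _ => hx
      · exact fun hc => absurd hu hc
  have hXc_card : Xᶜ.card = Y.card + U.card := by
    rw [hXcomp, Finset.card_union_of_disjoint hdYU]
  have hYc_card : Yᶜ.card = X.card + U.card := by
    rw [hYcomp, Finset.card_union_of_disjoint hdXU]
  have hcard1 : X.card + Xᶜ.card = n := by
    rw [Finset.card_add_card_compl, Fintype.card_fin]
  have hn : (X.card : ℝ) + (Y.card : ℝ) + (U.card : ℝ) = (n : ℝ) := by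
    have h := hcard1
    rw [hXc_card] at h
    push_cast [← h]
    ring
  have e1 : crossCount G X Xᶜ = crossCount G X Y + crossCount G X U := by
    rw [hXcomp, crossCount_union G X Y U hdYU]
  have e2 : crossCount G Y Yᶜ = crossCount G X Y + crossCount G Y U := by
    rw [hYcomp, crossCount_union G Y X U hdXU, crossCount_comm G Y X]
  have h1 := hG X
  have h2 := hG Y
  rw [e1] at h1
  rw [e2] at h2
  rw [hXc_card] at h1
  rw [hYc_card] at h2
  have H1 : (crossCount G X Y : ℝ) + (crossCount G X U : ℝ) ≥
      μ * (X.card : ℝ) * ((Y.card : ℝ) + (U.card : ℝ)) := by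
    push_cast at h1 ⊢; linarith
  have H2 : (crossCount G X Y : ℝ) + (crossCount G Y U : ℝ) ≥
      μ * (Y.card : ℝ) * ((X.card : ℝ) + (U.card : ℝ)) := by
    push_cast at h2 ⊢; linarith
  have B1 : (crossCount G X U : ℝ) ≤ (X.card : ℝ) * (U.card : ℝ) := by
    exact_mod_cast crossCount_le G X U
  have B2 : (crossCount G Y U : ℝ) ≤ (Y.card : ℝ) * (U.card : ℝ) := by
    exact_mod_cast crossCount_le G Y U
  have hx0 : (0 : ℝ) ≤ (X.card : ℝ) := Nat.cast_nonneg _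
  have hy0 : (0 : ℝ) ≤ (Y.card : ℝ) := Nat.cast_nonneg _
  have hu0 : (0 : ℝ) ≤ (U.card : ℝ) := Nat.cast_nonneg _
  have hbμn : β * μ * ((X.card : ℝ) + (Y.card : ℝ) + (U.card : ℝ)) = β * μ * (n : ℝ) := by
    rw [hn]
  clear hG h1 h2 e1 e2 hXcomp hYcomp hd hdYU hdXU hX hXc_card hYc_card hcard1 hYdef
  rcases le_total (X.card : ℝ) (Y.card : ℝ) with hcase | hcase
  · have key : 2 * β * μ * (Y.card : ℝ) ≥ (1 - μ) * (U.card : ℝ) := by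
      nlinarith [hbμn, mul_nonneg (mul_nonneg hβ0.le hμ.le) (sub_nonneg.mpr hcase),
        mul_nonneg (mul_nonneg hu0 hμ.le) (by linarith : (0:ℝ) ≤ 1 - β)]
    nlinarith [mul_nonneg hx0 (by linarith :
      (0:ℝ) ≤ 2 * β * μ * (Y.card : ℝ) - (1 - μ) * (U.card : ℝ))]
  · have key : 2 * β * μ * (X.card : ℝ) ≥ (1 - μ) * (U.card : ℝ) := by
      nlinarith [hbμn, mul_nonneg (mul_nonneg hβ0.le hμ.le) (sub_nonneg.mpr hcase),
        mul_nonneg (mul_nonneg hu0 hμ.le) (by linarith : (0:ℝ) ≤ 1 - β)]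
    nlinarith [mul_nonneg hy0 (by linarith :
      (0:ℝ) ≤ 2 * β * μ * (X.card : ℝ) - (1 - μ) * (U.card : ℝ))]
end

section
/- Let G be a μ-inseparable graph on n vertices (n large) and x∈V(G). Define X_i as the set of vertices v reachable from x by at least δ_i n^i walks with i inner vertices, where δ_i = (μ²/3)^i·(1/2)^{C(i+1,2)}, and X^i = ∪_{j≤i} X_j. Then for every i≥0: if |X^i| ≤ 2n/3 then |X^{i+1}∖X^i| ≥ μn/6. Consequently there is some i₀ < ⌊4/μ⌋ with |X^{i₀}| > 2n/3. -/
open Finset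
open scoped Classical

variable {V : Type*} [Fintype V] [DecidableEq V]

section walkaux
variable {W : Type*}

private lemma wcast_eq (x u v : W) (j : ℕ) (w : Fin j → W) :
    ∀ i : Fin (j+2),
      (Fin.cons x (Fin.snoc (Fin.snoc w u) v) : Fin (j+3) → W) i.castSucc
        = (Fin.cons x (Fin.snoc w u) : Fin (j+2) → W) i := by
  intro i
  induction i using Fin.cases with
  | zero => simp
  | succ i' =>
      rw [← Fin.succ_castSucc]
      simp [Fin.snoc_castSucc]

private lemma cons_snoc_last (x u : W) (j : ℕ) (w : Fin j → W) :
    (Fin.cons x (Fin.snoc w u) : Fin (j+2) → W) (Fin.last (j+1)) = u := by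
  rw [show Fin.last (j+1) = Fin.succ (Fin.last j) from rfl, Fin.cons_succ, Fin.snoc_last]

private lemma big_last (x u v : W) (j : ℕ) (w : Fin j → W) :
    (Fin.cons x (Fin.snoc (Fin.snoc w u) v) : Fin (j+3) → W) (Fin.last (j+1)).succ = v := by
  rw [show (Fin.last (j+1)).succ = Fin.succ (Fin.last (j+1)) from rfl, Fin.cons_succ,
    Fin.snoc_last]

private lemma snoc_walk_iff (G : SimpleGraph W) (x u v : W) (j : ℕ) (w : Fin j → W) :
    (∀ i : Fin (j+2),
      G.Adj ((Fin.cons x (Fin.snoc (Fin.snoc w u) v) : Fin (j+3) → W) i.castSucc)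
        ((Fin.cons x (Fin.snoc (Fin.snoc w u) v) : Fin (j+3) → W) i.succ))
    ↔ (∀ i : Fin (j+1),
      G.Adj ((Fin.cons x (Fin.snoc w u) : Fin (j+2) → W) i.castSucc)
        ((Fin.cons x (Fin.snoc w u) : Fin (j+2) → W) i.succ)) ∧ G.Adj u v := by
  constructor
  · intro H
    constructor
    · intro i
      have h := H i.castSucc
      rw [wcast_eq x u v j w, Fin.succ_castSucc, wcast_eq x u v j w] at h
      exact h
    · have h := H (Fin.last (j+1))
      rw [wcast_eq x u v j w, cons_snoc_last, big_last] at h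
      exact h
  · rintro ⟨H, huv⟩
    intro i
    induction i using Fin.lastCases with
    | last =>
        rw [wcast_eq x u v j w, cons_snoc_last, big_last]
        exact huv
    | cast i' =>
        rw [wcast_eq x u v j w, Fin.succ_castSucc, wcast_eq x u v j w]
        exact H i'

end walkaux

private lemma walkCount_succ_sum (G : SimpleGraph V) (x v : V) (j : ℕ) (S : Finset V)
    (hS : ∀ u ∈ S, G.Adj u v) :
    ∑ u ∈ S, walkCount G x u j ≤ walkCount G x v (j+1) := by
  classical
  set T : V → Finset (Fin j → V) := fun u => Finset.univ.filter fun w : Fin j → V =>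
    ∀ i : Fin (j + 1),
      G.Adj ((Fin.cons x (Fin.snoc w u) : Fin (j + 2) → V) i.castSucc)
        ((Fin.cons x (Fin.snoc w u) : Fin (j + 2) → V) i.succ) with hT
  have hinj : ∀ u : V, Function.Injective (fun w : Fin j → V => (Fin.snoc w u : Fin (j+1) → V)) := by
    intro u w w' h
    have := congrArg Fin.init h
    simpa [Fin.init_snoc] using this
  have hcard : ∀ u ∈ S,
      ((T u).image (fun w : Fin j → V => (Fin.snoc w u : Fin (j+1) → V))).card
        = walkCount G x u j := by
    intro u _
    rw [Finset.card_image_of_injective _ (hinj u)]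
    rfl
  have hdisj : ∀ u₁ ∈ S, ∀ u₂ ∈ S, u₁ ≠ u₂ →
      Disjoint ((T u₁).image (fun w : Fin j → V => (Fin.snoc w u₁ : Fin (j+1) → V)))
        ((T u₂).image (fun w : Fin j → V => (Fin.snoc w u₂ : Fin (j+1) → V))) := by
    intro u₁ _ u₂ _ hne
    rw [Finset.disjoint_left]
    rintro z hz1 hz2
    simp only [Finset.mem_image] at hz1 hz2
    obtain ⟨w1, _, rfl⟩ := hz1
    obtain ⟨w2, _, h2⟩ := hz2
    apply hne
    have := congrArg (fun f => f (Fin.last j)) h2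
    simpa [Fin.snoc_last] using this.symm
  have hsub : S.biUnion (fun u => (T u).image (fun w : Fin j → V => (Fin.snoc w u : Fin (j+1) → V))) ⊆
      Finset.univ.filter fun w' : Fin (j+1) → V =>
        ∀ i : Fin (j + 2),
          G.Adj ((Fin.cons x (Fin.snoc w' v) : Fin (j + 3) → V) i.castSucc)
            ((Fin.cons x (Fin.snoc w' v) : Fin (j + 3) → V) i.succ) := by
    intro z hz
    simp only [Finset.mem_biUnion, Finset.mem_image] at hz
    obtain ⟨u, hu, w, hw, rfl⟩ := hz
    simp only [Finset.mem_filter, Finset.mem_univ, true_and]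
    rw [snoc_walk_iff]
    refine ⟨?_, hS u hu⟩
    simpa [hT, Finset.mem_filter] using hw
  calc ∑ u ∈ S, walkCount G x u j
      = ∑ u ∈ S, ((T u).image (fun w : Fin j → V => (Fin.snoc w u : Fin (j+1) → V))).card :=
        (Finset.sum_congr rfl hcard).symm
    _ = (S.biUnion (fun u => (T u).image (fun w : Fin j → V => (Fin.snoc w u : Fin (j+1) → V)))).card :=
        (Finset.card_biUnion hdisj).symm
    _ ≤ _ := Finset.card_le_card hsub

private lemma walkCount_zero_ge (G : SimpleGraph V) (x y : V) (h : G.Adj x y) :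
    1 ≤ walkCount G x y 0 := by
  rw [walkCount, Finset.one_le_card]
  refine ⟨fun i => i.elim0, ?_⟩
  simp only [Finset.mem_filter, Finset.mem_univ, true_and]
  intro i
  have : i = 0 := Fin.eq_zero i
  subst this
  simpa [Fin.snoc] using h

private lemma crossCount_eq_sum (G : SimpleGraph V) (S T : Finset V) :
    crossCount G S T = ∑ t ∈ T, (S.filter (fun s => G.Adj s t)).card := by
  classical
  rw [crossCount, Finset.card_filter, Finset.sum_product, Finset.sum_comm]
  exact Finset.sum_congr rfl fun t _ => (Finset.card_filter _ _).symm

private lemma tri_succ (j : ℕ) : (j+1)*(j+1+1)/2 = j*(j+1)/2 + (j+1) := by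
  obtain ⟨m, hm⟩ := Nat.even_mul_succ_self j
  have h2 : (j+1)*(j+1+1) = j*(j+1) + 2*(j+1) := by ring
  omega

private lemma geom_half (m : ℕ) : ∑ j ∈ Finset.range m, (1/2:ℝ)^(j+1) ≤ 1 := by
  have key : ∀ m : ℕ, ∑ j ∈ Finset.range m, (1/2:ℝ)^(j+1) = 1 - (1/2:ℝ)^m := by
    intro m
    induction m with
    | zero => simp
    | succ m ih => rw [Finset.sum_range_succ, ih]; ring
  rw [key]
  have : (0:ℝ) ≤ (1/2:ℝ)^m := by positivity
  linarith

theorem stmt16aux (μ : ℝ) (hμ0 : 0 < μ) (hμ1 : μ ≤ 1) {n : ℕ} (hn : 12 ≤ n)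
    (G : SimpleGraph (Fin n)) (hG : MuInsep G μ) (x : Fin n)
    (Xset : ℕ → Finset (Fin n))
    (hXset : Xset = fun i => Finset.univ.filter fun v =>
      (walkCount G x v i : ℝ) ≥ (μ ^ 2 / 3) ^ i * (1/2 : ℝ) ^ (i * (i + 1) / 2) * (n : ℝ) ^ i)
    (Xup : ℕ → Finset (Fin n))
    (hXup : Xup = fun i => (Finset.range (i + 1)).biUnion Xset) :
    (∀ i : ℕ, ((Xup i).card : ℝ) ≤ 2 * (n : ℝ) / 3 →
        (((Xup (i + 1)) \ (Xup i)).card : ℝ) ≥ μ * (n : ℝ) / 6) ∧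
      ∃ i₀ : ℕ, i₀ < ⌊(4 : ℝ) / μ⌋₊ ∧ ((Xup i₀).card : ℝ) > 2 * (n : ℝ) / 3 := by
  have hnR : (12:ℝ) ≤ (n:ℝ) := by exact_mod_cast hn
  have hmem : ∀ j (v : Fin n), v ∈ Xset j ↔
      (walkCount G x v j : ℝ) ≥ (μ ^ 2 / 3) ^ j * (1/2 : ℝ) ^ (j * (j + 1) / 2) * (n : ℝ) ^ j := by
    subst hXset; intro j v; simp [Finset.mem_filter]
  have hXupdef : ∀ i, Xup i = (Finset.range (i + 1)).biUnion Xset := by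
    subst hXup; intro i; rfl
  have hdelta_pos : ∀ j : ℕ, (0:ℝ) < (μ ^ 2 / 3) ^ j * (1/2 : ℝ) ^ (j * (j + 1) / 2) * (n : ℝ) ^ j := by
    intro j
    have hn0 : (0:ℝ) < (n:ℝ) := by linarith
    positivity
  -- x's neighbourhood is inside Xset 0
  have hX0 : μ * ((n:ℝ) - 1) ≤ ((Xset 0).card : ℝ) := by
    have hins := hG {x}
    have hcompl : (({x}ᶜ : Finset (Fin n)).card : ℝ) = (n:ℝ) - 1 := by
      rw [Finset.card_compl]
      simp only [Finset.card_singleton]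
      have : 1 ≤ Fintype.card (Fin n) := by simp; omega
      push_cast [Nat.cast_sub this]
      simp
    have hle : crossCount G {x} ({x}ᶜ) ≤ (Xset 0).card := by
      apply Finset.card_le_card_of_injOn (fun p => p.2)
      · intro p hp
        simp only [crossCount, Finset.mem_coe, Finset.mem_filter, Finset.mem_product,
          Finset.mem_singleton] at hp
        obtain ⟨⟨hp1, _⟩, hadj⟩ := hp
        rw [Finset.mem_coe, hmem]
        have h1 : 1 ≤ walkCount G x p.2 0 := by
          apply walkCount_zero_ge
          rwa [← hp1]
        have : (1:ℝ) ≤ (walkCount G x p.2 0 : ℝ) := by exact_mod_cast h1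
        simpa using this
      · intro p hp q hq hpq
        simp only [crossCount, Finset.mem_coe, Finset.mem_filter, Finset.mem_product,
          Finset.mem_singleton] at hp hq
        exact Prod.ext (hp.1.1.trans hq.1.1.symm) hpq
    have hle' : (crossCount G {x} ({x}ᶜ) : ℝ) ≤ ((Xset 0).card : ℝ) := by exact_mod_cast hle
    have := hins
    rw [hcompl] at this
    simp only [Finset.card_singleton, Nat.cast_one, mul_one] at this
    linarith
  have hX0sub : ∀ i, Xset 0 ⊆ Xup i := by
    intro i
    rw [hXupdef]
    intro v hv
    exact Finset.mem_biUnion.2 ⟨0, Finset.mem_range.2 (Nat.succ_pos i), hv⟩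
  -- promotion of vertices with many neighbours in Xset j
  have promote : ∀ (j : ℕ) (v : Fin n),
      (((Xset j).filter (fun u => G.Adj u v)).card : ℝ) ≥ μ ^ 2 / 3 * (1/2:ℝ)^(j+1) * (n:ℝ) →
      v ∈ Xset (j+1) := by
    intro j v hv
    rw [hmem]
    set A := (Xset j).filter (fun u => G.Adj u v) with hA
    have h1 : ∑ u ∈ A, walkCount G x u j ≤ walkCount G x v (j+1) :=
      walkCount_succ_sum G x v j A (fun u hu => (Finset.mem_filter.1 hu).2)
    have h2 : ∀ u ∈ A, ((μ ^ 2 / 3) ^ j * (1/2 : ℝ) ^ (j * (j + 1) / 2) * (n : ℝ) ^ j)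
        ≤ (walkCount G x u j : ℝ) := by
      intro u hu
      exact (hmem j u).1 (Finset.mem_filter.1 hu).1
    have h3 : (A.card : ℝ) * ((μ ^ 2 / 3) ^ j * (1/2 : ℝ) ^ (j * (j + 1) / 2) * (n : ℝ) ^ j)
        ≤ ∑ u ∈ A, (walkCount G x u j : ℝ) := by
      have := Finset.card_nsmul_le_sum A (fun u => (walkCount G x u j : ℝ))
        ((μ ^ 2 / 3) ^ j * (1/2 : ℝ) ^ (j * (j + 1) / 2) * (n : ℝ) ^ j) h2
      simpa [nsmul_eq_mul] using this
    have h4 : (∑ u ∈ A, (walkCount G x u j : ℝ)) ≤ (walkCount G x v (j+1) : ℝ) := by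
      push_cast
      exact_mod_cast h1
    have hexp : (μ ^ 2 / 3) ^ (j+1) * (1/2 : ℝ) ^ ((j+1) * (j + 1 + 1) / 2) * (n : ℝ) ^ (j+1)
        = (μ ^ 2 / 3 * (1/2:ℝ)^(j+1) * (n:ℝ)) *
          ((μ ^ 2 / 3) ^ j * (1/2 : ℝ) ^ (j * (j + 1) / 2) * (n : ℝ) ^ j) := by
      rw [tri_succ, pow_add, pow_succ, pow_succ]
      ring
    rw [hexp]
    have hδ := hdelta_pos j
    calc (μ ^ 2 / 3 * (1/2:ℝ)^(j+1) * (n:ℝ)) *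
          ((μ ^ 2 / 3) ^ j * (1/2 : ℝ) ^ (j * (j + 1) / 2) * (n : ℝ) ^ j)
        ≤ (A.card : ℝ) * ((μ ^ 2 / 3) ^ j * (1/2 : ℝ) ^ (j * (j + 1) / 2) * (n : ℝ) ^ j) := by
          apply mul_le_mul_of_nonneg_right hv hδ.le
      _ ≤ ∑ u ∈ A, (walkCount G x u j : ℝ) := h3
      _ ≤ _ := h4
  -- PART (a)
  have parta : ∀ i : ℕ, ((Xup i).card : ℝ) ≤ 2 * (n : ℝ) / 3 →
      (((Xup (i + 1)) \ (Xup i)).card : ℝ) ≥ μ * (n : ℝ) / 6 := by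
    intro i hSle
    set S := Xup i with hS
    set T := Sᶜ with hTdef
    have hScard_le_n : (S.card : ℝ) ≤ (n:ℝ) := by
      have h3 : S.card ≤ n := by simpa using Finset.card_le_univ S
      exact_mod_cast h3
    have hTcard : (T.card : ℝ) = (n:ℝ) - (S.card : ℝ) := by
      rw [hTdef, Finset.card_compl]
      have h1 : S.card ≤ Fintype.card (Fin n) := Finset.card_le_univ S
      push_cast [Nat.cast_sub h1]
      simp
    have hS1 : μ * ((n:ℝ) - 1) ≤ (S.card : ℝ) := by
      calc μ * ((n:ℝ) - 1) ≤ ((Xset 0).card : ℝ) := hX0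
        _ ≤ (S.card : ℝ) := by exact_mod_cast Finset.card_le_card (hX0sub i)
    set P : Fin n → Prop := fun v => ∃ j, j ≤ i ∧
      (((Xset j).filter (fun u => G.Adj u v)).card : ℝ) ≥ μ ^ 2 / 3 * (1/2:ℝ)^(j+1) * (n:ℝ)
      with hPdef
    set Good := T.filter P with hGood
    -- good vertices are in the new set
    have hgoodsub : Good ⊆ Xup (i+1) \ Xup i := by
      intro v hv
      obtain ⟨hvT, j, hj, hcard⟩ := Finset.mem_filter.1 hv
      rw [Finset.mem_sdiff]
      constructor
      · rw [hXupdef]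
        exact Finset.mem_biUnion.2 ⟨j+1, Finset.mem_range.2 (by omega), promote j v hcard⟩
      · rw [hTdef] at hvT
        exact fun h => (Finset.mem_compl.1 hvT) h
    -- degree bound for bad vertices
    have hbad : ∀ v ∈ T \ Good, ((S.filter (fun u => G.Adj u v)).card : ℝ) ≤ μ^2/3 * (n:ℝ) := by
      intro v hv
      obtain ⟨hvT, hvn⟩ := Finset.mem_sdiff.1 hv
      have hnP : ¬ P v := fun hP => hvn (Finset.mem_filter.2 ⟨hvT, hP⟩)
      have hnP' : ∀ j, j ≤ i →
          (((Xset j).filter (fun u => G.Adj u v)).card : ℝ) < μ ^ 2 / 3 * (1/2:ℝ)^(j+1) * (n:ℝ) :=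
        fun j hj => lt_of_not_ge (fun h => hnP ⟨j, hj, h⟩)
      have hsplit : (S.filter (fun u => G.Adj u v)).card ≤
          ∑ j ∈ Finset.range (i+1), ((Xset j).filter (fun u => G.Adj u v)).card := by
        rw [hS, hXupdef, Finset.filter_biUnion]
        exact Finset.card_biUnion_le
      have hcast : ((S.filter (fun u => G.Adj u v)).card : ℝ) ≤
          ∑ j ∈ Finset.range (i+1), (((Xset j).filter (fun u => G.Adj u v)).card : ℝ) := by
        push_cast
        exact_mod_cast hsplit
      calc ((S.filter (fun u => G.Adj u v)).card : ℝ)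
          ≤ ∑ j ∈ Finset.range (i+1), (((Xset j).filter (fun u => G.Adj u v)).card : ℝ) := hcast
        _ ≤ ∑ j ∈ Finset.range (i+1), μ ^ 2 / 3 * (1/2:ℝ)^(j+1) * (n:ℝ) := by
            apply Finset.sum_le_sum
            intro j hj
            exact le_of_lt (hnP' j (Nat.lt_succ_iff.1 (Finset.mem_range.1 hj)))
        _ = μ^2/3 * (n:ℝ) * ∑ j ∈ Finset.range (i+1), (1/2:ℝ)^(j+1) := by
            rw [Finset.mul_sum]; apply Finset.sum_congr rfl; intro j _; ring
        _ ≤ μ^2/3 * (n:ℝ) * 1 := by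
            apply mul_le_mul_of_nonneg_left (geom_half (i+1))
            positivity
        _ = μ^2/3 * (n:ℝ) := by ring
    -- the counting
    have hcount : (crossCount G S T : ℝ) = ∑ t ∈ T, ((S.filter (fun s => G.Adj s t)).card : ℝ) := by
      rw [crossCount_eq_sum]
      push_cast
      rfl
    have hGoodT : Good ⊆ T := Finset.filter_subset _ _
    have hsplitsum : ∑ t ∈ T, ((S.filter (fun s => G.Adj s t)).card : ℝ)
        = ∑ t ∈ T \ Good, ((S.filter (fun s => G.Adj s t)).card : ℝ)
          + ∑ t ∈ Good, ((S.filter (fun s => G.Adj s t)).card : ℝ) := by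
      rw [Finset.sum_sdiff hGoodT]
    have hsum1 : ∑ t ∈ Good, ((S.filter (fun s => G.Adj s t)).card : ℝ)
        ≤ (Good.card : ℝ) * (S.card : ℝ) := by
      calc ∑ t ∈ Good, ((S.filter (fun s => G.Adj s t)).card : ℝ)
          ≤ ∑ t ∈ Good, (S.card : ℝ) := by
            apply Finset.sum_le_sum
            intro t _
            exact_mod_cast Finset.card_filter_le S _
        _ = (Good.card : ℝ) * (S.card : ℝ) := by rw [Finset.sum_const, nsmul_eq_mul]
    have hsum2 : ∑ t ∈ T \ Good, ((S.filter (fun s => G.Adj s t)).card : ℝ)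
        ≤ (T.card : ℝ) * (μ^2/3 * (n:ℝ)) := by
      calc ∑ t ∈ T \ Good, ((S.filter (fun s => G.Adj s t)).card : ℝ)
          ≤ ∑ t ∈ T \ Good, μ^2/3 * (n:ℝ) := Finset.sum_le_sum hbad
        _ = ((T \ Good).card : ℝ) * (μ^2/3 * (n:ℝ)) := by rw [Finset.sum_const, nsmul_eq_mul]
        _ ≤ (T.card : ℝ) * (μ^2/3 * (n:ℝ)) := by
            have h1 : ((T \ Good).card : ℝ) ≤ (T.card : ℝ) := by
              exact_mod_cast Finset.card_le_card (Finset.sdiff_subset)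
            apply mul_le_mul_of_nonneg_right h1
            positivity
    have hins := hG S
    have hmain : μ * (S.card : ℝ) * (T.card : ℝ)
        ≤ (Good.card : ℝ) * (S.card : ℝ) + (T.card : ℝ) * (μ^2/3 * (n:ℝ)) := by
      calc μ * (S.card : ℝ) * (T.card : ℝ) ≤ (crossCount G S T : ℝ) := hins
        _ = _ := hcount
        _ ≤ _ := by rw [hsplitsum]; linarith
    -- arithmetic
    have hT3 : (T.card : ℝ) ≥ (n:ℝ)/3 := by rw [hTcard]; linarith
    have hS23 : (S.card : ℝ) ≥ 2*μ*(n:ℝ)/3 := by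
      nlinarith [mul_nonneg hμ0.le (show (0:ℝ) ≤ (n:ℝ)/3 - 1 by linarith)]
    have hSpos : (0:ℝ) < (S.card : ℝ) := by
      nlinarith [mul_pos hμ0 (show (0:ℝ) < (n:ℝ) - 1 by linarith)]
    have hGood6 : (Good.card : ℝ) ≥ μ * (n:ℝ) / 6 := by
      have hμn3 : (0:ℝ) ≤ μ*(n:ℝ)/3 := by positivity
      have hA : (0:ℝ) ≤ (S.card:ℝ) - μ*(n:ℝ)/3 := by linarith
      have e1 : μ*((n:ℝ)/3) ≤ μ*(T.card:ℝ) := mul_le_mul_of_nonneg_left hT3 hμ0.le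
      have e2 : μ*((n:ℝ)/3)*((S.card:ℝ) - μ*(n:ℝ)/3) ≤ μ*(T.card:ℝ)*((S.card:ℝ) - μ*(n:ℝ)/3) :=
        mul_le_mul_of_nonneg_right e1 hA
      have e3 : (S.card:ℝ)/2 ≤ (S.card:ℝ) - μ*(n:ℝ)/3 := by linarith
      have e4 : μ*((n:ℝ)/3)*((S.card:ℝ)/2) ≤ μ*((n:ℝ)/3)*((S.card:ℝ) - μ*(n:ℝ)/3) :=
        mul_le_mul_of_nonneg_left e3 (by positivity)
      have e5 : μ*(S.card:ℝ)*(T.card:ℝ) - (T.card:ℝ)*(μ^2/3*(n:ℝ))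
          = μ*(T.card:ℝ)*((S.card:ℝ) - μ*(n:ℝ)/3) := by ring
      have key : (μ * (n:ℝ) / 6) * (S.card : ℝ) ≤ (Good.card : ℝ) * (S.card : ℝ) := by
        linarith [hmain, e2, e4, e5]
      exact le_of_mul_le_mul_right key hSpos
    calc μ * (n : ℝ) / 6 ≤ (Good.card : ℝ) := hGood6
      _ ≤ _ := by exact_mod_cast Finset.card_le_card hgoodsub
  refine ⟨parta, ?_⟩
  -- PART (b)
  by_contra hcon
  push_neg at hcon
  set K := ⌊(4:ℝ)/μ⌋₊ with hK
  have hKge : ((K:ℝ)) > 4/μ - 1 := by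
    have h1 : (4:ℝ)/μ < K + 1 := Nat.lt_floor_add_one _
    linarith
  have hK4 : 4 ≤ K := by
    have : (4:ℝ) ≤ 4/μ := by
      rw [le_div_iff₀ hμ0]
      nlinarith [hμ1]
    have := Nat.le_floor (by linarith : (4:ℝ) ≤ 4/μ)
    exact_mod_cast this
  have hmono : ∀ m, Xup m ⊆ Xup (m+1) := by
    intro m
    rw [hXupdef, hXupdef]
    apply Finset.biUnion_subset_biUnion_of_subset_left
    intro j hj
    rw [Finset.mem_range] at hj ⊢
    omega
  have hstep : ∀ m, m + 1 < K → ((Xup (m+1)).card : ℝ) ≥ ((Xup m).card : ℝ) + μ * (n:ℝ)/6 := by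
    intro m hm
    have h1 := hcon m (by omega)
    have h2 := parta m h1
    have h3 : (Xup (m+1) \ Xup m).card + (Xup m).card = (Xup (m+1)).card :=
      Finset.card_sdiff_add_card_eq_card (hmono m)
    have h4 : ((Xup (m+1) \ Xup m).card : ℝ) + ((Xup m).card : ℝ) = ((Xup (m+1)).card : ℝ) := by
      exact_mod_cast h3
    linarith
  have hind : ∀ m, m < K → ((Xup m).card : ℝ) ≥ μ * ((n:ℝ) - 1) + m * (μ * (n:ℝ)/6) := by
    intro m
    induction m with
    | zero =>
        intro _
        simp only [Nat.cast_zero, zero_mul, add_zero]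
        calc μ * ((n:ℝ) - 1) ≤ ((Xset 0).card : ℝ) := hX0
          _ ≤ _ := by exact_mod_cast Finset.card_le_card (hX0sub 0)
    | succ m ih =>
        intro hm
        have h1 := ih (by omega)
        have h2 := hstep m hm
        push_cast
        push_cast at h1
        linarith
  have hfin := hind (K-1) (by omega)
  have hle := hcon (K-1) (by omega)
  have hKcast : ((K-1 : ℕ) : ℝ) = (K:ℝ) - 1 := by
    have : 1 ≤ K := by omega
    push_cast [Nat.cast_sub this]
    simp
  rw [hKcast] at hfin
  have hK2 : (K:ℝ) - 1 ≥ 4/μ - 2 := by linarith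
  have hterm : ((K:ℝ) - 1) * (μ * (n:ℝ)/6) ≥ (4/μ - 2) * (μ * (n:ℝ)/6) := by
    apply mul_le_mul_of_nonneg_right hK2
    positivity
  have hexpand : (4/μ - 2) * (μ * (n:ℝ)/6) = 2*(n:ℝ)/3 - μ*(n:ℝ)/3 := by
    field_simp
    ring
  linarith [mul_pos hμ0 (show (0:ℝ) < 2*(n:ℝ)/3 - 1 by linarith)]

/-- expansion of the sets of vertices reachable by many walks from x. -/
theorem stmt16 (μ : ℝ) (hμ0 : 0 < μ) (hμ1 : μ ≤ 1) :
    ∃ n₀ : ℕ, ∀ n ≥ n₀, ∀ G : SimpleGraph (Fin n), MuInsep G μ → ∀ x : Fin n,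
      let Xset : ℕ → Finset (Fin n) := fun i => Finset.univ.filter fun v =>
        (walkCount G x v i : ℝ) ≥ (μ ^ 2 / 3) ^ i * (1/2 : ℝ) ^ (i * (i + 1) / 2) * (n : ℝ) ^ i
      let Xup : ℕ → Finset (Fin n) := fun i => (Finset.range (i + 1)).biUnion Xset
      (∀ i : ℕ, ((Xup i).card : ℝ) ≤ 2 * (n : ℝ) / 3 →
        (((Xup (i + 1)) \ (Xup i)).card : ℝ) ≥ μ * (n : ℝ) / 6) ∧
      ∃ i₀ : ℕ, i₀ < ⌊(4 : ℝ) / μ⌋₊ ∧ ((Xup i₀).card : ℝ) > 2 * (n : ℝ) / 3 := by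
  refine ⟨12, fun n hn G hG x => ?_⟩
  intro Xset Xup
  exact stmt16aux μ hμ0 hμ1 hn G hG x Xset rfl Xup rfl
end

section
/- The n-vertex graph G formed by two cliques of size (1/2+μ/2)n whose vertex sets intersect in μn vertices is μ-inseparable and (ρ,1/2)-dense for every fixed ρ>0 (and n sufficiently large), but G fails the bipartite density property: there exist disjoint sets X,Y with e(X,Y)=0 and |X||Y| = Ω(n²). -/
open Finset
open scoped Classical

variable {V : Type*} [Fintype V] [DecidableEq V]

lemma card_filter_val_lt (n s : ℕ) (h : s ≤ n) :
    ((univ : Finset (Fin n)).filter fun u : Fin n => (u : ℕ) < s).card = s := by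
  have he : ((univ : Finset (Fin n)).filter fun u : Fin n => (u : ℕ) < s)
      = Finset.attachFin (Finset.range s)
        (fun m hm => lt_of_lt_of_le (Finset.mem_range.mp hm) h) := by
    ext u
    simp [Finset.mem_attachFin]
  rw [he, Finset.card_attachFin, Finset.card_range]

lemma card_filter_le_val (n r : ℕ) (h : r ≤ n) :
    ((univ : Finset (Fin n)).filter fun u : Fin n => r ≤ (u : ℕ)).card = n - r := by
  have he : ((univ : Finset (Fin n)).filter fun u : Fin n => r ≤ (u : ℕ))
      = ((univ : Finset (Fin n)).filter fun u : Fin n => (u : ℕ) < r)ᶜ := by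
    ext u
    simp [not_lt]
  rw [he, Finset.card_compl, card_filter_val_lt n r h, Fintype.card_fin]

lemma cross_split {α : Type*} [DecidableEq α] (X Y A B : Finset α) (hXY : Disjoint X Y) :
    ((X ×ˢ Y).filter fun p => p.1 ≠ p.2 ∧ ((p.1 ∈ A ∧ p.2 ∈ A) ∨ (p.1 ∈ B ∧ p.2 ∈ B))).card
      + (X ∩ (A ∩ B)).card * (Y ∩ (A ∩ B)).card
    = (X ∩ A).card * (Y ∩ A).card + (X ∩ B).card * (Y ∩ B).card := by
  have hne : ∀ p ∈ X ×ˢ Y, ((p : α × α).1 ≠ p.2 ∧ ((p.1 ∈ A ∧ p.2 ∈ A) ∨ (p.1 ∈ B ∧ p.2 ∈ B)))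
      ↔ ((p.1 ∈ A ∧ p.2 ∈ A) ∨ (p.1 ∈ B ∧ p.2 ∈ B)) := by
    rintro ⟨u, v⟩ hp
    rw [Finset.mem_product] at hp
    have : u ≠ v := fun h => (Finset.disjoint_left.mp hXY hp.1 (h ▸ hp.2))
    tauto
  have h1 : ((X ×ˢ Y).filter fun p => p.1 ∈ A ∧ p.2 ∈ A) = (X ∩ A) ×ˢ (Y ∩ A) := by
    ext ⟨u, v⟩; simp [Finset.mem_product]; tauto
  have h2 : ((X ×ˢ Y).filter fun p => p.1 ∈ B ∧ p.2 ∈ B) = (X ∩ B) ×ˢ (Y ∩ B) := by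
    ext ⟨u, v⟩; simp [Finset.mem_product]; tauto
  have key := Finset.card_union_add_card_inter
    ((X ×ˢ Y).filter fun p => p.1 ∈ A ∧ p.2 ∈ A)
    ((X ×ˢ Y).filter fun p => p.1 ∈ B ∧ p.2 ∈ B)
  have h12 : (((X ×ˢ Y).filter fun p => p.1 ∈ A ∧ p.2 ∈ A) ∩
      ((X ×ˢ Y).filter fun p => p.1 ∈ B ∧ p.2 ∈ B))
      = (X ∩ (A ∩ B)) ×ˢ (Y ∩ (A ∩ B)) := by
    ext ⟨u, v⟩; simp [Finset.mem_product]; tauto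
  rw [h12, h1, h2] at key
  rw [Finset.filter_congr hne, Finset.filter_or, h1, h2]
  simp only [Finset.card_product] at key ⊢
  linarith

lemma inner_split {α : Type*} [DecidableEq α] (U A B : Finset α) :
    ((U ×ˢ U).filter fun p => p.1 ≠ p.2 ∧ ((p.1 ∈ A ∧ p.2 ∈ A) ∨ (p.1 ∈ B ∧ p.2 ∈ B))).card
      + (U ∩ (A ∩ B)).offDiag.card
    = (U ∩ A).offDiag.card + (U ∩ B).offDiag.card := by
  have hne : ∀ p ∈ U ×ˢ U, ((p : α × α).1 ≠ p.2 ∧ ((p.1 ∈ A ∧ p.2 ∈ A) ∨ (p.1 ∈ B ∧ p.2 ∈ B)))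
      ↔ ((p.1 ≠ p.2 ∧ p.1 ∈ A ∧ p.2 ∈ A) ∨ (p.1 ≠ p.2 ∧ p.1 ∈ B ∧ p.2 ∈ B)) := by
    rintro ⟨u, v⟩ hp; tauto
  have h1 : ((U ×ˢ U).filter fun p => p.1 ≠ p.2 ∧ p.1 ∈ A ∧ p.2 ∈ A) = (U ∩ A).offDiag := by
    ext ⟨u, v⟩; simp [Finset.mem_product, Finset.mem_offDiag]; tauto
  have h2 : ((U ×ˢ U).filter fun p => p.1 ≠ p.2 ∧ p.1 ∈ B ∧ p.2 ∈ B) = (U ∩ B).offDiag := by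
    ext ⟨u, v⟩; simp [Finset.mem_product, Finset.mem_offDiag]; tauto
  have h12 : (((U ×ˢ U).filter fun p => p.1 ≠ p.2 ∧ p.1 ∈ A ∧ p.2 ∈ A) ∩
      ((U ×ˢ U).filter fun p => p.1 ≠ p.2 ∧ p.1 ∈ B ∧ p.2 ∈ B))
      = (U ∩ (A ∩ B)).offDiag := by
    ext ⟨u, v⟩; simp [Finset.mem_product, Finset.mem_offDiag]; tauto
  have key := Finset.card_union_add_card_inter
    ((U ×ˢ U).filter fun p => p.1 ≠ p.2 ∧ p.1 ∈ A ∧ p.2 ∈ A)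
    ((U ×ˢ U).filter fun p => p.1 ≠ p.2 ∧ p.1 ∈ B ∧ p.2 ∈ B)
  rw [h12, h1, h2] at key
  rw [Finset.filter_congr hne, Finset.filter_or, h1, h2]
  linarith

lemma keyIneq (a b m c t : ℝ) (ha : 0 ≤ a) (hac : a ≤ c) (hb : 0 ≤ b) (hbc : b ≤ c)
    (hm : 0 ≤ m) (hmt : m ≤ t) :
    t * (a + b + m) * ((2*c + t) - (a + b + m))
      ≤ (2*c + t) * ((a + m) * ((c + t) - (a + m)) + (b + m) * ((c + t) - (b + m))
        - m * (t - m)) := by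
  have hc : 0 ≤ c := le_trans ha hac
  have ht : 0 ≤ t := le_trans hm hmt
  rcases le_total (a + b) c with h | h
  · nlinarith [mul_nonneg (mul_nonneg ha hb) ht, mul_nonneg (mul_nonneg hc hm) (sub_nonneg.2 hmt),
      mul_nonneg (mul_nonneg ha hc) (sub_nonneg.2 hac),
      mul_nonneg (mul_nonneg hb hc) (sub_nonneg.2 hbc),
      mul_nonneg (mul_nonneg hc hm) (sub_nonneg.2 h),
      mul_nonneg (mul_nonneg hc ht) (add_nonneg ha hb)]
  · nlinarith [mul_nonneg (mul_nonneg hc hm) (sub_nonneg.2 hmt),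
      mul_nonneg (mul_nonneg ha hc) (sub_nonneg.2 hac),
      mul_nonneg (mul_nonneg hb hc) (sub_nonneg.2 hbc),
      mul_nonneg (mul_nonneg hc (sub_nonneg.2 hmt)) (sub_nonneg.2 h),
      mul_nonneg (mul_nonneg ht hc) (sub_nonneg.2 hac),
      mul_nonneg (mul_nonneg ht (sub_nonneg.2 hac)) (sub_nonneg.2 hbc),
      mul_nonneg (mul_nonneg ht hc) (sub_nonneg.2 hbc)]

lemma nat_le_mul_self (k : ℕ) : k ≤ k * k := by
  rcases Nat.eq_zero_or_pos k with h | h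
  · simp [h]
  · exact Nat.le_mul_of_pos_left k h

set_option maxHeartbeats 1000000

/-- two cliques of size (1/2+μ/2)n sharing μn vertices give a μ-inseparable
and (ρ,1/2)-dense graph which fails the bipartite density property. -/
theorem stmt17 (μ : ℝ) (hμ0 : 0 < μ) (hμ1 : μ ≤ 1) (ρ : ℝ) (hρ : 0 < ρ) :
    ∃ n₀ : ℕ, ∀ n ≥ n₀, ∀ s t : ℕ,
      (s : ℝ) = (1/2 + μ/2) * (n : ℝ) → (t : ℝ) = μ * (n : ℝ) →
      ∀ G : SimpleGraph (Fin n),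
      G = SimpleGraph.fromRel (fun u v : Fin n =>
        ((u : ℕ) < s ∧ (v : ℕ) < s) ∨ (s - t ≤ (u : ℕ) ∧ s - t ≤ (v : ℕ))) →
      MuInsep G μ ∧ RhoDense G ρ (1/2) ∧
      ∃ X Y : Finset (Fin n), Disjoint X Y ∧ crossCount G X Y = 0 ∧
        (X.card : ℝ) = (1/2 - μ/2) * (n : ℝ) ∧ (Y.card : ℝ) = (1/2 - μ/2) * (n : ℝ) := by
  refine ⟨⌈1/(2*ρ)⌉₊ + 1, fun n hn s t hs ht G hG => ?_⟩
  -- basic numeric facts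
  have hn0 : 0 < n := lt_of_lt_of_le (Nat.succ_pos _) hn
  have hnR0 : (0:ℝ) < n := by exact_mod_cast hn0
  have hρn : (1:ℝ) ≤ 2 * ρ * n := by
    have h1 : (1/(2*ρ) : ℝ) ≤ (⌈1/(2*ρ)⌉₊ : ℝ) := Nat.le_ceil _
    have h2 : ((⌈1/(2*ρ)⌉₊ + 1 : ℕ) : ℝ) ≤ (n : ℝ) := by exact_mod_cast hn
    have h3 : (1/(2*ρ) : ℝ) ≤ (n : ℝ) := by push_cast at h2; linarith
    rw [div_le_iff₀ (by linarith)] at h3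
    linarith
  have hts : t ≤ s := by
    have : (t:ℝ) ≤ (s:ℝ) := by rw [hs, ht]; nlinarith [hnR0.le]
    exact_mod_cast this
  have hsn : s ≤ n := by
    have : (s:ℝ) ≤ (n:ℝ) := by rw [hs]; nlinarith [hnR0.le]
    exact_mod_cast this
  have hstR : ((s - t : ℕ) : ℝ) = (1/2 - μ/2) * n := by
    rw [Nat.cast_sub hts, hs, ht]; ring
  have hnsR : ((n - s : ℕ) : ℝ) = (1/2 - μ/2) * n := by
    rw [Nat.cast_sub hsn, hs]; ring
  -- the two cliques
  set A : Finset (Fin n) := univ.filter (fun u : Fin n => (u:ℕ) < s) with hAdef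
  set B : Finset (Fin n) := univ.filter (fun u : Fin n => s - t ≤ (u:ℕ)) with hBdef
  have hmemA : ∀ u : Fin n, u ∈ A ↔ (u:ℕ) < s := fun u => by simp [hAdef]
  have hmemB : ∀ u : Fin n, u ∈ B ↔ s - t ≤ (u:ℕ) := fun u => by simp [hBdef]
  have hA : A.card = s := card_filter_val_lt n s hsn
  have hB : B.card = n - (s - t) := card_filter_le_val n (s - t) (le_trans (Nat.sub_le s t) hsn)
  have hABu : A ∪ B = univ := by
    ext u
    simp only [Finset.mem_union, Finset.mem_univ, iff_true, hmemA, hmemB]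
    omega
  have hABcard : (A ∩ B).card = t := by
    have h := Finset.card_union_add_card_inter A B
    rw [hABu, hA, hB] at h
    simp only [Finset.card_univ, Fintype.card_fin] at h
    omega
  -- adjacency description
  have hAdj : ∀ u v : Fin n, G.Adj u v ↔
      u ≠ v ∧ ((u ∈ A ∧ v ∈ A) ∨ (u ∈ B ∧ v ∈ B)) := by
    subst hG
    intro u v
    rw [SimpleGraph.fromRel_adj]
    simp only [hmemA, hmemB]
    tauto
  -- common card facts relative to a subset X
  have hsplit : ∀ X : Finset (Fin n),
      (X ∩ A).card + (X ∩ B).card = X.card + (X ∩ (A ∩ B)).card := by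
    intro X
    have h := Finset.card_union_add_card_inter (X ∩ A) (X ∩ B)
    have h1 : (X ∩ A) ∪ (X ∩ B) = X := by
      rw [← Finset.inter_union_distrib_left, hABu, Finset.inter_univ]
    have h2 : (X ∩ A) ∩ (X ∩ B) = X ∩ (A ∩ B) := by
      ext u; simp only [Finset.mem_inter]; tauto
    rw [h1, h2] at h
    omega
  have hsdA : (A \ B).card = s - t := by
    have h := Finset.card_sdiff_add_card_inter A B
    rw [hA, hABcard] at h
    omega
  have hsdB : (B \ A).card = n - s := by
    have h := Finset.card_sdiff_add_card_inter B A
    rw [Finset.inter_comm, hABcard, hB] at h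
    omega
  have hboundA : ∀ X : Finset (Fin n),
      (X ∩ A).card ≤ (X ∩ (A ∩ B)).card + (s - t) := by
    intro X
    have hsub : X ∩ A ⊆ (X ∩ (A ∩ B)) ∪ (A \ B) := by
      intro u hu
      simp only [Finset.mem_inter, Finset.mem_union, Finset.mem_sdiff] at hu ⊢
      by_cases h : u ∈ B <;> tauto
    calc (X ∩ A).card ≤ ((X ∩ (A ∩ B)) ∪ (A \ B)).card := Finset.card_le_card hsub
      _ ≤ (X ∩ (A ∩ B)).card + (A \ B).card := Finset.card_union_le _ _
      _ = (X ∩ (A ∩ B)).card + (s - t) := by rw [hsdA]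
  have hboundB : ∀ X : Finset (Fin n),
      (X ∩ B).card ≤ (X ∩ (A ∩ B)).card + (n - s) := by
    intro X
    have hsub : X ∩ B ⊆ (X ∩ (A ∩ B)) ∪ (B \ A) := by
      intro u hu
      simp only [Finset.mem_inter, Finset.mem_union, Finset.mem_sdiff] at hu ⊢
      by_cases h : u ∈ A <;> tauto
    calc (X ∩ B).card ≤ ((X ∩ (A ∩ B)) ∪ (B \ A)).card := Finset.card_le_card hsub
      _ ≤ (X ∩ (A ∩ B)).card + (B \ A).card := Finset.card_union_le _ _
      _ = (X ∩ (A ∩ B)).card + (n - s) := by rw [hsdB]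
  refine ⟨?_, ?_, ?_⟩
  · -- MuInsep
    intro X
    have hdisj : Disjoint X Xᶜ := disjoint_compl_right
    have hcc : crossCount G X Xᶜ = ((X ×ˢ Xᶜ).filter fun p =>
        p.1 ≠ p.2 ∧ ((p.1 ∈ A ∧ p.2 ∈ A) ∨ (p.1 ∈ B ∧ p.2 ∈ B))).card := by
      unfold crossCount
      congr 1
      apply Finset.filter_congr
      intro p _
      exact hAdj p.1 p.2
    have hkey := cross_split X Xᶜ A B hdisj
    rw [← hcc] at hkey
    -- complement cards
    have hcompl : ∀ C : Finset (Fin n), (X ∩ C).card + (Xᶜ ∩ C).card = C.card := by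
      intro C
      have h1 : (X ∩ C) ∪ (Xᶜ ∩ C) = C := by
        ext u
        simp only [Finset.mem_union, Finset.mem_inter, Finset.mem_compl]
        tauto
      have h2 : Disjoint (X ∩ C) (Xᶜ ∩ C) := by
        apply Finset.disjoint_left.mpr
        intro u hu hu'
        simp only [Finset.mem_inter, Finset.mem_compl] at hu hu'
        exact hu'.1 hu.1
      rw [← Finset.card_union_of_disjoint h2, h1]
    -- real variables
    set P := ((X ∩ A).card : ℝ) with hP
    set Q := ((X ∩ B).card : ℝ) with hQ
    set R := ((X ∩ (A ∩ B)).card : ℝ) with hR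
    have hPA : P + ((Xᶜ ∩ A).card : ℝ) = (s : ℝ) := by
      rw [hP, ← hA]; exact_mod_cast congrArg Nat.cast (hcompl A)
    have hQB : Q + ((Xᶜ ∩ B).card : ℝ) = (n : ℝ) - (s : ℝ) + (t : ℝ) := by
      have := hcompl B
      rw [hB] at this
      have hc : ((X ∩ B).card : ℝ) + ((Xᶜ ∩ B).card : ℝ) = ((n - (s - t) : ℕ) : ℝ) := by
        exact_mod_cast congrArg Nat.cast this
      rw [hQ, hc, Nat.cast_sub (le_trans (Nat.sub_le s t) hsn), Nat.cast_sub hts]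
      ring
    have hRM : R + ((Xᶜ ∩ (A ∩ B)).card : ℝ) = (t : ℝ) := by
      rw [hR, ← hABcard]; exact_mod_cast congrArg Nat.cast (hcompl (A ∩ B))
    have hXcard : (X.card : ℝ) = P + Q - R := by
      have h := hsplit X
      have h2 : ((X ∩ A).card : ℝ) + ((X ∩ B).card : ℝ)
          = (X.card : ℝ) + ((X ∩ (A ∩ B)).card : ℝ) := by exact_mod_cast h
      rw [hP, hQ, hR]; linarith
    have hXn : X.card ≤ n := by
      have h := Finset.card_le_univ X
      rwa [Fintype.card_fin] at h
    have hXc : (Xᶜ.card : ℝ) = (n : ℝ) - (X.card : ℝ) := by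
      have h := hcompl univ
      rw [Finset.inter_univ, Finset.inter_univ, Finset.card_univ, Fintype.card_fin] at h
      have h2 : (X.card : ℝ) + (Xᶜ.card : ℝ) = (n : ℝ) := by exact_mod_cast h
      linarith
    have hcross : (crossCount G X Xᶜ : ℝ) + R * ((t:ℝ) - R)
        = P * ((s:ℝ) - P) + Q * (((n:ℝ) - s + t) - Q) := by
      have hc : (crossCount G X Xᶜ : ℝ) + R * ((Xᶜ ∩ (A ∩ B)).card : ℝ)
          = P * ((Xᶜ ∩ A).card : ℝ) + Q * ((Xᶜ ∩ B).card : ℝ) := by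
        have hc0 := congrArg (Nat.cast : ℕ → ℝ) hkey
        push_cast at hc0
        rw [← hP, ← hQ, ← hR] at hc0
        exact hc0
      have e1 : ((Xᶜ ∩ A).card : ℝ) = (s:ℝ) - P := by linarith
      have e2 : ((Xᶜ ∩ B).card : ℝ) = ((n:ℝ) - s + t) - Q := by linarith
      have e3 : ((Xᶜ ∩ (A ∩ B)).card : ℝ) = (t:ℝ) - R := by linarith
      rw [e1, e2, e3] at hc
      exact hc
    -- bounds
    have hRP : R ≤ P := by
      rw [hR, hP]; exact_mod_cast Finset.card_le_card (Finset.inter_subset_inter Finset.Subset.rfl Finset.inter_subset_left)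
    have hRQ : R ≤ Q := by
      rw [hR, hQ]; exact_mod_cast Finset.card_le_card (Finset.inter_subset_inter Finset.Subset.rfl Finset.inter_subset_right)
    have hR0 : 0 ≤ R := by rw [hR]; positivity
    have hRt : R ≤ (t:ℝ) := by
      rw [hR, ← hABcard]
      exact_mod_cast Finset.card_le_card Finset.inter_subset_right
    have hPb : P - R ≤ (1/2 - μ/2) * n := by
      have := hboundA X
      have hc : P ≤ R + ((s - t : ℕ) : ℝ) := by
        rw [hP, hR]; exact_mod_cast this
      rw [hstR] at hc; linarith
    have hQb : Q - R ≤ (1/2 - μ/2) * n := by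
      have := hboundB X
      have hc : Q ≤ R + ((n - s : ℕ) : ℝ) := by
        rw [hQ, hR]; exact_mod_cast this
      rw [hnsR] at hc; linarith
    -- apply the key inequality
    have hkey2 := keyIneq (P - R) (Q - R) R ((1/2 - μ/2) * n) (μ * n)
      (by linarith) hPb (by linarith) hQb hR0 (by rw [← ht]; exact hRt)
    have h2c : 2 * ((1/2 - μ/2) * n) + μ * n = (n : ℝ) := by ring
    have hct : (1/2 - μ/2) * n + μ * n = (s : ℝ) := by rw [hs]; ring
    have hst2 : (n:ℝ) - s + t = (s:ℝ) := by rw [hs, ht]; ring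
    rw [hst2] at hcross
    have hsum : P - R + (Q - R) + R = P + Q - R := by ring
    rw [hsum, h2c, hct] at hkey2
    have hPa : P - R + R = P := by ring
    have hQa : Q - R + R = Q := by ring
    rw [hPa, hQa, ← ht] at hkey2
    -- hkey2 : t * (P+Q-R) * (n - (P+Q-R)) ≤ n * (P*(s-P) + Q*(s-Q) - R*(t-R))
    have hcr : (crossCount G X Xᶜ : ℝ) = P * ((s:ℝ) - P) + Q * ((s:ℝ) - Q) - R * ((t:ℝ) - R) := by
      linarith
    have hfinal : (t:ℝ) * (X.card : ℝ) * (Xᶜ.card : ℝ) ≤ (n:ℝ) * (crossCount G X Xᶜ : ℝ) := by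
      rw [hcr, hXcard, hXc, hXcard]
      linarith [hkey2]
    rw [ht] at hfinal
    have := le_of_mul_le_mul_left (by linarith [hfinal] :
      (n:ℝ) * (μ * (X.card : ℝ) * (Xᶜ.card : ℝ)) ≤ (n:ℝ) * (crossCount G X Xᶜ : ℝ)) hnR0
    linarith
  · -- RhoDense
    intro U
    have hep : edgePairs G U = ((U ×ˢ U).filter fun p =>
        p.1 ≠ p.2 ∧ ((p.1 ∈ A ∧ p.2 ∈ A) ∨ (p.1 ∈ B ∧ p.2 ∈ B))).card := by
      unfold edgePairs
      congr 1
      apply Finset.filter_congr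
      intro p _
      exact hAdj p.1 p.2
    have hkey := inner_split U A B
    rw [← hep] at hkey
    set p := (U ∩ A).card with hp
    set q := (U ∩ B).card with hq
    set r := (U ∩ (A ∩ B)).card with hr
    have hoff : ∀ C : Finset (Fin n), ((C.offDiag.card : ℝ)) = (C.card : ℝ)^2 - C.card := by
      intro C
      rw [Finset.offDiag_card, Nat.cast_sub (nat_le_mul_self _)]
      push_cast; ring
    have hepR : (edgePairs G U : ℝ) + ((r:ℝ)^2 - r) = ((p:ℝ)^2 - p) + ((q:ℝ)^2 - q) := by
      have hc : (edgePairs G U : ℝ) + ((U ∩ (A ∩ B)).offDiag.card : ℝ)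
          = ((U ∩ A).offDiag.card : ℝ) + ((U ∩ B).offDiag.card : ℝ) := by
        exact_mod_cast congrArg Nat.cast hkey
      rw [hoff, hoff, hoff] at hc
      exact_mod_cast hc
    have hsum := hsplit U
    have hsumR : (p:ℝ) + q = (U.card : ℝ) + r := by exact_mod_cast hsum
    have hrp : (r:ℝ) ≤ p := by
      exact_mod_cast Finset.card_le_card (Finset.inter_subset_inter Finset.Subset.rfl Finset.inter_subset_left)
    have hrq : (r:ℝ) ≤ q := by
      exact_mod_cast Finset.card_le_card (Finset.inter_subset_inter Finset.Subset.rfl Finset.inter_subset_right)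
    have hr0 : (0:ℝ) ≤ r := by positivity
    have hUn : (U.card : ℝ) ≤ n := by
      have := Finset.card_le_univ U
      simp only [Finset.card_univ, Fintype.card_fin] at this
      exact_mod_cast this
    have hU0 : (0:ℝ) ≤ (U.card : ℝ) := by positivity
    simp only [ge_iff_le, Fintype.card_fin]
    nlinarith [sq_nonneg ((p:ℝ) - q), mul_nonneg hr0 (sub_nonneg.2 hrp),
      mul_nonneg hr0 (sub_nonneg.2 hrq), sq_nonneg (r:ℝ),
      mul_nonneg hnR0.le (by linarith : (0:ℝ) ≤ 2*ρ*n - 1), hepR, hsumR, hUn, hU0]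
  · -- the bad pair X, Y
    refine ⟨univ.filter (fun u : Fin n => (u:ℕ) < s - t),
      univ.filter (fun u : Fin n => s ≤ (u:ℕ)), ?_, ?_, ?_, ?_⟩
    · apply Finset.disjoint_left.mpr
      intro u hu hu'
      simp only [Finset.mem_filter, Finset.mem_univ, true_and] at hu hu'
      omega
    · unfold crossCount
      rw [Finset.card_eq_zero, Finset.filter_eq_empty_iff]
      rintro ⟨u, v⟩ hp hadj
      rw [Finset.mem_product] at hp
      simp only [Finset.mem_filter, Finset.mem_univ, true_and] at hp
      rw [hAdj] at hadj
      obtain ⟨-, h⟩ := hadj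
      simp only [hmemA, hmemB] at h
      omega
    · rw [card_filter_val_lt n (s - t) (le_trans (Nat.sub_le s t) hsn)]
      exact hstR
    · rw [card_filter_le_val n s hsn]
      exact hnsR
end
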